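/- arXiv:1304.5530 — 4 statements merged into one kernel-verified Lean document; each statement's English description precedes it below -/
import Mathlib

section
/- Let (Ω,𝓕,ℙ) be a probability space, fix x₀ ∈ ℝ^N, and let {x_k}_{k≥1} be random vectors in ℝ^N. Let φ : ℝ^N → ℝ be nonnegative and measurable, set ξ_k = φ(x_k) (so ξ₀ = φ(x₀) is a constant), assume each ξ_k is integrable and that ξ_{k+1} ≤ ξ_k almost surely for every k ≥ 0. Let α, β ≥ 0, c₂ > 0 with αc₂ < 1 ≤ (1+α)c₂, let ρ ∈ (0,1), and let ε satisfy βc₂/(ρ(1 − αc₂)) < ε < ξ₀. Suppose that for every k ≥ 0, almost surely on the event {ξ_k ≥ ε}, the conditional expectation satisfies E[ξ_{k+1} | σ(x_k)] ≤ (1 + α − 1/c₂)ξ_k + β. Then for every natural number K with K ≥ (c₂/(1 − αc₂)) · log((ξ₀ − βc₂/(1 − αc₂))/(ερ − βc₂/(1 − αc₂))), one has ℙ(ξ_K ≤ ε) ≥ 1 − ρ. -/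
/-!
Let `A_k = {ξ_k ≥ ε}` and `u_k = ∫_{A_k} ξ_k`. Since `ξ` is nonincreasing, `A_{k+1} ⊆ A_k`, and
since `A_k` is `σ(x_k)`-measurable, the conditional bound integrates over `A_k` to the linear
recursion `u_{k+1} ≤ q u_k + β` with `q = 1 + α − 1/c₂ ∈ [0, 1)`. Its fixed point is
`B = βc₂/(1 − αc₂)`, so `u_K ≤ q^K (ξ₀ − B) + B ≤ e^{−K(1−q)} (ξ₀ − B) + B ≤ ερ` for `K` as in the
statement, and Markov's inequality on `A_K` gives `ℙ(A_K) ≤ ρ`.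
-/

open MeasureTheory Real

lemma le_geometric_of_le_mul_add {q B : ℝ} {u : ℕ → ℝ} (hq : 0 ≤ q)
    (hrec : ∀ k, u (k + 1) ≤ q * u k + (1 - q) * B) (k : ℕ) :
    u k ≤ q ^ k * (u 0 - B) + B := by
  induction k with
  | zero => simp
  | succ k ih =>
    calc u (k + 1) ≤ q * u k + (1 - q) * B := hrec k
      _ ≤ q * (q ^ k * (u 0 - B) + B) + (1 - q) * B := by gcongr
      _ = q ^ (k + 1) * (u 0 - B) + B := by ring

lemma pow_le_exp_neg_mul_one_sub {q : ℝ} (hq : 0 ≤ q) (K : ℕ) :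
    q ^ K ≤ exp (-((1 - q) * K)) := by
  have hq_le : q ≤ exp (q - 1) := by linarith [add_one_le_exp (q - 1)]
  calc q ^ K ≤ exp (q - 1) ^ K := pow_le_pow_left₀ hq hq_le K
    _ = exp (-((1 - q) * K)) := by rw [← exp_nat_mul]; ring_nf

lemma geometric_le_of_log_div_le {q B u t : ℝ} {K : ℕ} (hq : 0 ≤ q) (hBt : B < t) (hBu : B < u)
    (hK : log ((u - B) / (t - B)) ≤ (1 - q) * K) :
    q ^ K * (u - B) + B ≤ t := by
  have hratio : 0 < (u - B) / (t - B) := div_pos (by linarith) (by linarith)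
  have hpow : q ^ K ≤ (t - B) / (u - B) :=
    calc q ^ K ≤ exp (-((1 - q) * K)) := pow_le_exp_neg_mul_one_sub hq K
      _ ≤ exp (-log ((u - B) / (t - B))) := exp_le_exp.2 (neg_le_neg hK)
      _ = (t - B) / (u - B) := by rw [exp_neg, exp_log hratio, inv_div]
  calc q ^ K * (u - B) + B ≤ (t - B) / (u - B) * (u - B) + B := by gcongr
    _ = t := by rw [div_mul_cancel₀ _ (by linarith)]; ring

section Superlevel

variable {Ω : Type*} {m m₀ : MeasurableSpace Ω} {μ : Measure Ω} [IsProbabilityMeasure μ]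

lemma setIntegral_superlevel_le_of_condExp_le (hm : m ≤ m₀) {f g : Ω → ℝ} {q β ε : ℝ}
    (hf : Measurable[m] f) (hfi : Integrable f μ) (hgi : Integrable g μ) (hg : 0 ≤ g)
    (hgf : g ≤ᵐ[μ] f) (hβ : 0 ≤ β)
    (hcond : ∀ᵐ ω ∂μ, ε ≤ f ω → μ[g | m] ω ≤ q * f ω + β) :
    ∫ ω in {ω | ε ≤ g ω}, g ω ∂μ ≤ q * ∫ ω in {ω | ε ≤ f ω}, f ω ∂μ + β := by
  have hA : MeasurableSet[m] {ω | ε ≤ f ω} := measurableSet_le measurable_const hf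
  calc ∫ ω in {ω | ε ≤ g ω}, g ω ∂μ ≤ ∫ ω in {ω | ε ≤ f ω}, g ω ∂μ := by
        refine setIntegral_mono_set hgi.integrableOn (.of_forall hg) ?_
        filter_upwards [hgf] with ω hω hεg using hεg.trans hω
    _ = ∫ ω in {ω | ε ≤ f ω}, μ[g | m] ω ∂μ := (setIntegral_condExp hm hgi hA).symm
    _ ≤ ∫ ω in {ω | ε ≤ f ω}, (q * f ω + β) ∂μ :=
        setIntegral_mono_on_ae integrable_condExp.integrableOn
          ((hfi.const_mul q).add (integrable_const β)).integrableOn (hm _ hA) hcond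
    _ = q * ∫ ω in {ω | ε ≤ f ω}, f ω ∂μ + μ.real {ω | ε ≤ f ω} * β := by
        rw [integral_add (hfi.const_mul q).integrableOn (integrable_const β).integrableOn,
          integral_const_mul, setIntegral_const, smul_eq_mul]
    _ ≤ q * ∫ ω in {ω | ε ≤ f ω}, f ω ∂μ + β := by
        gcongr
        exact mul_le_of_le_one_left hβ measureReal_le_one

theorem setIntegral_superlevel_le_geometric {ℱ : ℕ → MeasurableSpace Ω} (hℱ : ∀ k, ℱ k ≤ m₀)
    {ξ : ℕ → Ω → ℝ} (hξm : ∀ k, Measurable[ℱ k] (ξ k)) (hξi : ∀ k, Integrable (ξ k) μ)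
    (hξ : ∀ k, 0 ≤ ξ k) (hmono : ∀ k, ξ (k + 1) ≤ᵐ[μ] ξ k) {q B ε : ℝ} (hq : 0 ≤ q)
    (hB : 0 ≤ (1 - q) * B)
    (hcond : ∀ k, ∀ᵐ ω ∂μ, ε ≤ ξ k ω → μ[ξ (k + 1) | ℱ k] ω ≤ q * ξ k ω + (1 - q) * B)
    (K : ℕ) :
    ∫ ω in {ω | ε ≤ ξ K ω}, ξ K ω ∂μ ≤
      q ^ K * (∫ ω in {ω | ε ≤ ξ 0 ω}, ξ 0 ω ∂μ - B) + B :=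
  le_geometric_of_le_mul_add (u := fun k => ∫ ω in {ω | ε ≤ ξ k ω}, ξ k ω ∂μ) hq
    (fun k => setIntegral_superlevel_le_of_condExp_le (hℱ k) (hξm k) (hξi k) (hξi (k + 1))
      (hξ (k + 1)) (hmono k) hB (hcond k)) K

lemma ofReal_one_sub_le_measure_le_of_setIntegral_le {f : Ω → ℝ} {ε ρ : ℝ} (hf : Measurable f)
    (hfi : Integrable f μ) (hε : 0 < ε) (h : ∫ ω in {ω | ε ≤ f ω}, f ω ∂μ ≤ ε * ρ) :
    ENNReal.ofReal (1 - ρ) ≤ μ {ω | f ω ≤ ε} := by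
  have hA : MeasurableSet {ω | ε ≤ f ω} := measurableSet_le measurable_const hf
  have hmarkov : ε * μ.real {ω | ε ≤ f ω} ≤ ε * ρ :=
    (setIntegral_ge_of_const_le_real hA (measure_ne_top μ _) (fun _ hω => hω)
      hfi.integrableOn).trans h
  have hAc : {ω | ε ≤ f ω}ᶜ ⊆ {ω | f ω ≤ ε} := fun ω hω =>
    (not_le.1 (show ¬ε ≤ f ω from hω)).le
  refine ENNReal.ofReal_le_of_le_toReal ?_
  calc 1 - ρ ≤ 1 - μ.real {ω | ε ≤ f ω} := by linarith [le_of_mul_le_mul_left hmarkov hε]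
    _ = μ.real {ω | ε ≤ f ω}ᶜ := (probReal_compl_eq_one_sub hA).symm
    _ ≤ μ.real {ω | f ω ≤ ε} := measureReal_mono hAc

end Superlevel

theorem iteration_complexity_linear_general
    {N : ℕ} {Ω : Type*} [MeasurableSpace Ω] (μ : Measure Ω) [IsProbabilityMeasure μ]
    (x0 : Fin N → ℝ) (X : ℕ → Ω → Fin N → ℝ)
    (hXmeas : ∀ k, Measurable (X k)) (hX0 : ∀ ω, X 0 ω = x0)
    (φ : (Fin N → ℝ) → ℝ) (hφmeas : Measurable φ) (hφnonneg : ∀ v, 0 ≤ φ v)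
    (hint : ∀ k, Integrable (fun ω => φ (X k ω)) μ)
    (hmono : ∀ k, ∀ᵐ ω ∂μ, φ (X (k + 1) ω) ≤ φ (X k ω))
    (α β : ℝ) (hβ : 0 ≤ β) (c₂ : ℝ) (hc₂ : 0 < c₂)
    (hαc₂ : α * c₂ < 1) (hc₂' : 1 ≤ (1 + α) * c₂)
    (ρ : ℝ) (hρ : ρ ∈ Set.Ioo (0 : ℝ) 1) (ε : ℝ)
    (hεlow : β * c₂ / (ρ * (1 - α * c₂)) < ε) (hεup : ε < φ x0)
    (hcond : ∀ k, ∀ᵐ ω ∂μ, ε ≤ φ (X k ω) →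
      (μ[fun ω' => φ (X (k + 1) ω') |
          MeasurableSpace.comap (X k) MeasurableSpace.pi]) ω ≤
        (1 + α - 1 / c₂) * φ (X k ω) + β)
    (K : ℕ)
    (hK : c₂ / (1 - α * c₂) *
        Real.log ((φ x0 - β * c₂ / (1 - α * c₂)) / (ε * ρ - β * c₂ / (1 - α * c₂))) ≤ K) :
    ENNReal.ofReal (1 - ρ) ≤ μ {ω | φ (X K ω) ≤ ε} := by
  obtain ⟨hρ0, hρ1⟩ := hρ
  set q := 1 + α - 1 / c₂ with hq_def
  set B := β * c₂ / (1 - α * c₂) with hB_def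
  have hαc₂' : 0 < 1 - α * c₂ := by linarith
  have hq : 0 ≤ q := by
    have : 1 / c₂ ≤ 1 + α := by rw [div_le_iff₀ hc₂]; linarith
    linarith
  have h1q : 1 - q = (1 - α * c₂) / c₂ := by rw [hq_def]; field_simp; ring
  have hβB : β = (1 - q) * B := by rw [h1q, hB_def]; field_simp
  have hε : 0 < ε := lt_of_le_of_lt (by positivity) hεlow
  have hBερ : B < ε * ρ := (div_lt_iff₀ hρ0).1 (by rwa [div_div, mul_comm (1 - α * c₂)])
  have hlog : log ((φ x0 - B) / (ε * ρ - B)) ≤ (1 - q) * K :=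
    (inv_mul_le_iff₀ (by rw [h1q]; positivity)).1 (by rwa [h1q, inv_div])
  have hu0 : ∫ ω in {ω | ε ≤ φ (X 0 ω)}, φ (X 0 ω) ∂μ = φ x0 := by simp [hX0, hεup.le]
  have hξ : ∀ k, Measurable[MeasurableSpace.comap (X k) MeasurableSpace.pi] (fun ω => φ (X k ω)) :=
    fun k => hφmeas.comp (comap_measurable (X k))
  have hbound := setIntegral_superlevel_le_geometric (fun k => (hXmeas k).comap_le) hξ hint
    (fun k ω => hφnonneg _) hmono hq (hβB ▸ hβ) (hβB ▸ hcond) K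
  rw [hu0] at hbound
  refine ofReal_one_sub_le_measure_le_of_setIntegral_le (hφmeas.comp (hXmeas K)) (hint K) hε ?_
  exact hbound.trans <| geometric_le_of_log_div_le hq hBερ
    (hBερ.trans ((mul_lt_of_lt_one_right hε hρ1).trans hεup)) hlog

/-- Theorem 1(ii) of the paper: high-probability iteration complexity for a nonnegative,
nonincreasing stochastic process satisfying, on the event `{ξ_k ≥ ε}`, the one-step
inequality `E[ξ_{k+1} | σ(x_k)] ≤ (1 + α − 1/c₂)ξ_k + β`. -/
theorem iteration_complexity_linear
    {N : ℕ} {Ω : Type*} [MeasurableSpace Ω] (μ : Measure Ω) [IsProbabilityMeasure μ]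
    (x0 : Fin N → ℝ) (X : ℕ → Ω → Fin N → ℝ)
    (hXmeas : ∀ k, Measurable (X k)) (hX0 : ∀ ω, X 0 ω = x0)
    (φ : (Fin N → ℝ) → ℝ) (hφmeas : Measurable φ) (hφnonneg : ∀ v, 0 ≤ φ v)
    (hint : ∀ k, Integrable (fun ω => φ (X k ω)) μ)
    (hmono : ∀ k, ∀ᵐ ω ∂μ, φ (X (k + 1) ω) ≤ φ (X k ω))
    (α β : ℝ) (hα : 0 ≤ α) (hβ : 0 ≤ β) (c₂ : ℝ) (hc₂ : 0 < c₂)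
    (hαc₂ : α * c₂ < 1) (hc₂' : 1 ≤ (1 + α) * c₂)
    (ρ : ℝ) (hρ : ρ ∈ Set.Ioo (0 : ℝ) 1) (ε : ℝ)
    (hεlow : β * c₂ / (ρ * (1 - α * c₂)) < ε) (hεup : ε < φ x0)
    (hcond : ∀ k, ∀ᵐ ω ∂μ, ε ≤ φ (X k ω) →
      (μ[fun ω' => φ (X (k + 1) ω') |
          MeasurableSpace.comap (X k) MeasurableSpace.pi]) ω ≤
        (1 + α - 1 / c₂) * φ (X k ω) + β)
    (K : ℕ)
    (hK : c₂ / (1 - α * c₂) *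
        Real.log ((φ x0 - β * c₂ / (1 - α * c₂)) / (ε * ρ - β * c₂ / (1 - α * c₂))) ≤ K) :
    ENNReal.ofReal (1 - ρ) ≤ μ {ω | φ (X K ω) ≤ ε} :=
  iteration_complexity_linear_general μ x0 X hXmeas hX0 φ hφmeas hφnonneg hint hmono α β hβ c₂ hc₂
    hαc₂ hc₂' ρ hρ ε hεlow hεup hcond K hK
end

section
/- Suppose F = f + Ψ attains its minimum value F*. Then for every x ∈ E and every T = (T_1,…,T_n) ∈ E, (1/n) Σ_{i=1}^n F(x + U_i T_i) − F* ≤ (1/n)(H(x,T) − F*) + ((n−1)/n)(F(x) − F*). -/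
/-!
Restricted to the line through `x` in the direction `U_i t`, the block Lipschitz bound on `∇_i f`
makes the directional derivative grow at most like `L_i s ‖t‖²`, which integrates to the descent
bound `f (x + U_i t) ≤ f x + ⟨∇_i f x, t⟩ + (L_i / 2) ‖t‖²`. Since `x + U_i t` only changes the
`i`-th block, `Ψ` changes by `Ψ_i (x_i + t) - Ψ_i (x_i)`, so
`F (x + U_i T_i) ≤ F x + V_i(x, T_i) - V_i(x, 0)`. These increments sum to `H(x, T) - F x`,
hence `Σ_i F (x + U_i T_i) ≤ H(x, T) + (n - 1) F x`, and dividing by `n` gives the claim.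
-/

open scoped RealInnerProductSpace
open MeasureTheory

noncomputable section

variable {n : ℕ} {E : Fin n → Type*} [∀ i, NormedAddCommGroup (E i)]
  [∀ i, InnerProductSpace ℝ (E i)] [∀ i, FiniteDimensional ℝ (E i)]

/-- `U i t`: embedding of the `i`-th block into the product space `E = E₁ × ⋯ × Eₙ`
(the vector with `i`-th block equal to `t` and all other blocks zero). -/
def blockEmbed (i : Fin n) (t : E i) : PiLp 2 E :=
  (WithLp.equiv 2 (∀ j, E j)).symm (Pi.single i t)

/-- `V_i(x,t) = ⟨∇_i f(x), t⟩ + (L_i/2)‖t‖² + Ψ_i(x_i + t)`. -/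
def Vi (f : PiLp 2 E → ℝ) (L : Fin n → ℝ) (Ψ : ∀ i, E i → ℝ)
    (x : PiLp 2 E) (i : Fin n) (t : E i) : ℝ :=
  ⟪(gradient f x) i, t⟫ + L i / 2 * ‖t‖ ^ 2 + Ψ i (x i + t)

/-- `T` is a `δ`-inexact update at `x`:
`V_i(x, T_i) ≤ min{V_i(x,0), δ_i + inf_t V_i(x,t)}` for every block `i`. -/
def IsInexactUpdate (f : PiLp 2 E → ℝ) (L : Fin n → ℝ) (Ψ : ∀ i, E i → ℝ)
    (δ : Fin n → ℝ) (x T : PiLp 2 E) : Prop :=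
  ∀ i, Vi f L Ψ x i (T i) ≤ min (Vi f L Ψ x i 0) (δ i + ⨅ t : E i, Vi f L Ψ x i t)

/-- `H(x,T) = f(x) + ⟨∇f(x), T⟩ + (1/2)‖T‖_L² + Ψ(x+T)`. -/
def Hfun (f : PiLp 2 E → ℝ) (L : Fin n → ℝ) (Ψ : ∀ i, E i → ℝ) (x T : PiLp 2 E) : ℝ :=
  f x + ⟪gradient f x, T⟫ + (1/2) * ∑ i, L i * ‖T i‖ ^ 2 + ∑ i, Ψ i (x i + T i)

/-- `F = f + Ψ` where `Ψ(x) = Σ_i Ψ_i(x_i)`. -/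
def Ffun (f : PiLp 2 E → ℝ) (Ψ : ∀ i, E i → ℝ) (x : PiLp 2 E) : ℝ :=
  f x + ∑ i, Ψ i (x i)

theorem le_add_fderiv_add_of_fderiv_sub_le {F : Type*} [NormedAddCommGroup F] [NormedSpace ℝ F]
    {f : F → ℝ} (hf : Differentiable ℝ f) {x v : F} {C : ℝ}
    (h : ∀ s ∈ Set.Ico (0 : ℝ) 1, fderiv ℝ f (x + s • v) v - fderiv ℝ f x v ≤ C * s) :
    f (x + v) ≤ f x + fderiv ℝ f x v + C / 2 := by
  have hline : ∀ s : ℝ, HasDerivAt (fun s : ℝ => f (x + s • v)) (fderiv ℝ f (x + s • v) v) s :=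
    fun s => (hf _).hasFDerivAt.comp_hasDerivAt s
      (by simpa using ((hasDerivAt_id s).smul_const v).const_add x)
  have hbound : ∀ s : ℝ, HasDerivAt (fun s : ℝ => f x + s * fderiv ℝ f x v + C / 2 * s ^ 2)
      (fderiv ℝ f x v + C * s) s := fun s =>
    (((hasDerivAt_mul_const _).const_add _).add ((hasDerivAt_pow 2 s).const_mul _)).congr_deriv
      (by ring)
  have := image_le_of_deriv_right_le_deriv_boundary
    (fun s _ => (hline s).continuousAt.continuousWithinAt) (fun s _ => (hline s).hasDerivWithinAt)
    (by simp) (fun s _ => (hbound s).continuousAt.continuousWithinAt)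
    (fun s _ => (hbound s).hasDerivWithinAt) (fun s hs => by linarith [h s hs])
    (Set.right_mem_Icc.2 zero_le_one)
  simpa using this

omit [∀ i, InnerProductSpace ℝ (E i)] [∀ i, FiniteDimensional ℝ (E i)] in
lemma blockEmbed_eq_single (i : Fin n) (t : E i) : blockEmbed i t = PiLp.single 2 i t := rfl

omit [∀ i, FiniteDimensional ℝ (E i)] in
lemma blockEmbed_smul (i : Fin n) (c : ℝ) (t : E i) :
    blockEmbed i (c • t) = c • blockEmbed i t := by
  simp only [blockEmbed_eq_single, ← PiLp.toLp_single, Pi.single_smul, WithLp.toLp_smul]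

omit [∀ i, FiniteDimensional ℝ (E i)] in
lemma inner_blockEmbed (g : PiLp 2 E) (i : Fin n) (t : E i) :
    ⟪g, blockEmbed i t⟫ = ⟪g i, t⟫ := by
  rw [PiLp.inner_apply, Finset.sum_eq_single i (fun j _ hj => by
    rw [blockEmbed_eq_single, PiLp.single_eq_of_ne 2 hj, inner_zero_right]) (by simp),
    blockEmbed_eq_single, PiLp.single_eq_same]

lemma fderiv_apply_blockEmbed (f : PiLp 2 E → ℝ) (y : PiLp 2 E) (i : Fin n) (t : E i) :
    fderiv ℝ f y (blockEmbed i t) = ⟪(gradient f y) i, t⟫ := by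
  rw [← inner_gradient_left, inner_blockEmbed]

lemma le_add_inner_gradient_add_of_block_lipschitz {f : PiLp 2 E → ℝ} (hf : Differentiable ℝ f)
    {x : PiLp 2 E} {i : Fin n} {L : ℝ}
    (hLip : ∀ t : E i, ‖(gradient f (x + blockEmbed i t)) i - (gradient f x) i‖ ≤ L * ‖t‖)
    (t : E i) :
    f (x + blockEmbed i t) ≤ f x + ⟪(gradient f x) i, t⟫ + L / 2 * ‖t‖ ^ 2 := by
  have key := le_add_fderiv_add_of_fderiv_sub_le hf (x := x) (v := blockEmbed i t)
    (C := L * ‖t‖ ^ 2) fun s hs => by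
      rw [← blockEmbed_smul, fderiv_apply_blockEmbed, fderiv_apply_blockEmbed, ← inner_sub_left]
      calc _ ≤ ‖(gradient f (x + blockEmbed i (s • t))) i - (gradient f x) i‖ * ‖t‖ :=
            real_inner_le_norm _ _
        _ ≤ L * ‖s • t‖ * ‖t‖ := by gcongr; exact hLip _
        _ = L * ‖t‖ ^ 2 * s := by rw [norm_smul, Real.norm_of_nonneg hs.1]; ring
  rw [fderiv_apply_blockEmbed] at key
  linarith

omit [∀ i, InnerProductSpace ℝ (E i)] [∀ i, FiniteDimensional ℝ (E i)] in
lemma sum_apply_add_blockEmbed (Ψ : ∀ i, E i → ℝ) (x : PiLp 2 E) (i : Fin n) (t : E i) :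
    ∑ j, Ψ j ((x + blockEmbed i t) j) = ∑ j, Ψ j (x j) + (Ψ i (x i + t) - Ψ i (x i)) := by
  rw [← sub_eq_iff_eq_add', ← Finset.sum_sub_distrib, Finset.sum_eq_single i (fun j _ hj => by
    rw [PiLp.add_apply, blockEmbed_eq_single, PiLp.single_eq_of_ne 2 hj, add_zero, sub_self])
    (by simp), PiLp.add_apply, blockEmbed_eq_single, PiLp.single_eq_same]

lemma Vi_zero (f : PiLp 2 E → ℝ) (L : Fin n → ℝ) (Ψ : ∀ i, E i → ℝ) (x : PiLp 2 E) (i : Fin n) :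
    Vi f L Ψ x i 0 = Ψ i (x i) := by
  simp [Vi]

lemma Ffun_add_blockEmbed_le {L : Fin n → ℝ} {f : PiLp 2 E → ℝ} (hf : Differentiable ℝ f)
    {x : PiLp 2 E} {i : Fin n}
    (hLip : ∀ t : E i, ‖(gradient f (x + blockEmbed i t)) i - (gradient f x) i‖ ≤ L i * ‖t‖)
    (Ψ : ∀ i, E i → ℝ) (t : E i) :
    Ffun f Ψ (x + blockEmbed i t) ≤ Ffun f Ψ x + (Vi f L Ψ x i t - Vi f L Ψ x i 0) := by
  have := le_add_inner_gradient_add_of_block_lipschitz hf hLip t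
  rw [Ffun, Ffun, sum_apply_add_blockEmbed, Vi_zero, Vi]
  linarith

lemma Hfun_eq_Ffun_add_sum_Vi (f : PiLp 2 E → ℝ) (L : Fin n → ℝ) (Ψ : ∀ i, E i → ℝ)
    (x T : PiLp 2 E) :
    Hfun f L Ψ x T = Ffun f Ψ x + ∑ i, (Vi f L Ψ x i (T i) - Vi f L Ψ x i 0) := by
  simp only [Hfun, Ffun, Vi_zero]
  simp only [Vi, PiLp.inner_apply, Finset.sum_sub_distrib, Finset.sum_add_distrib, Finset.mul_sum]
  ring

theorem expected_residual_le_general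
    (hn : 0 < n)
    (L : Fin n → ℝ)
    (f : PiLp 2 E → ℝ) (hfdiff : Differentiable ℝ f)
    (hLip : ∀ (x : PiLp 2 E) (i : Fin n) (t : E i),
      ‖(gradient f (x + blockEmbed i t)) i - (gradient f x) i‖ ≤ L i * ‖t‖)
    (Ψ : ∀ i, E i → ℝ)
    (Fstar : ℝ)
    (x T : PiLp 2 E) :
    (1 / (n : ℝ)) * ∑ i, Ffun f Ψ (x + blockEmbed i (T i)) - Fstar ≤
      (1 / (n : ℝ)) * (Hfun f L Ψ x T - Fstar) +
        (((n : ℝ) - 1) / (n : ℝ)) * (Ffun f Ψ x - Fstar) := by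
  have hsum : ∑ i, Ffun f Ψ (x + blockEmbed i (T i)) ≤ Hfun f L Ψ x T + (n - 1) * Ffun f Ψ x :=
    calc _ ≤ ∑ i, (Ffun f Ψ x + (Vi f L Ψ x i (T i) - Vi f L Ψ x i 0)) :=
          Finset.sum_le_sum fun i _ => Ffun_add_blockEmbed_le hfdiff (hLip x i) Ψ (T i)
      _ = Hfun f L Ψ x T + (n - 1) * Ffun f Ψ x := by
          rw [Hfun_eq_Ffun_add_sum_Vi, Finset.sum_add_distrib]
          simp only [Finset.sum_const, Finset.card_univ, Fintype.card_fin, nsmul_eq_mul]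
          ring
  have hn' : (0 : ℝ) < n := Nat.cast_pos.2 hn
  have hmean := mul_le_mul_of_nonneg_left hsum (one_div_nonneg.2 hn'.le)
  calc _ ≤ 1 / (n : ℝ) * (Hfun f L Ψ x T + (n - 1) * Ffun f Ψ x) - Fstar := by linarith
    _ = _ := by field_simp; ring

/-- Expected residual after one uniform-random block update:
`(1/n) Σ_i F(x + U_i T_i) − F* ≤ (1/n)(H(x,T) − F*) + ((n−1)/n)(F(x) − F*)`. -/
theorem expected_residual_le
    (hn : 0 < n)
    (L : Fin n → ℝ) (hL : ∀ i, 0 < L i)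
    (f : PiLp 2 E → ℝ) (hfdiff : Differentiable ℝ f) (hfconv : ConvexOn ℝ Set.univ f)
    (hLip : ∀ (x : PiLp 2 E) (i : Fin n) (t : E i),
      ‖(gradient f (x + blockEmbed i t)) i - (gradient f x) i‖ ≤ L i * ‖t‖)
    (Ψ : ∀ i, E i → ℝ) (hΨconv : ∀ i, ConvexOn ℝ Set.univ (Ψ i))
    (hΨcont : ∀ i, Continuous (Ψ i))
    (Fstar : ℝ) (xstar : PiLp 2 E) (hstar : Ffun f Ψ xstar = Fstar)
    (hmin : ∀ y, Fstar ≤ Ffun f Ψ y)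
    (x T : PiLp 2 E) :
    (1 / (n : ℝ)) * ∑ i, Ffun f Ψ (x + blockEmbed i (T i)) - Fstar ≤
      (1 / (n : ℝ)) * (Hfun f L Ψ x T - Fstar) +
        (((n : ℝ) - 1) / (n : ℝ)) * (Ffun f Ψ x - Fstar) :=
  expected_residual_le_general hn L f hfdiff hLip Ψ Fstar x T
end
end

section
/- Suppose F = f + Ψ attains its minimum value F* at a point x*. Let x ∈ E with R := ‖x − x*‖_L > 0, let δ = (δ_1,…,δ_n) with δ_i ≥ 0, let T be a δ-inexact update at x, and set Δ = Σ_{i=1}^n δ_i. Then: if F(x) − F* ≤ R², then H(x, T) − F* ≤ Δ + (1 − (F(x) − F*)/(2R²))·(F(x) − F*); and if F(x) − F* > R², then H(x, T) − F* ≤ Δ + R²/2 < Δ + (F(x) − F*)/2. -/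
open scoped RealInnerProductSpace
open MeasureTheory

noncomputable section

variable {n : ℕ} {E : Fin n → Type*} [∀ i, NormedAddCommGroup (E i)]
  [∀ i, InnerProductSpace ℝ (E i)] [∀ i, FiniteDimensional ℝ (E i)]

/-! Each block of a `δ`-inexact update is `δᵢ`-optimal for `Vᵢ`, so `H(x,T) ≤ Δ + H(x,S)` for
every `S`. For `S = α (x* - x)` the gradient inequality for `f` gives
`H(x,S) ≤ F(x + S) + α² R² / 2`, and convexity of `F` bounds this by
`(1 - α) F(x) + α F* + α² R² / 2`. The choice `α = min 1 ((F(x) - F*) / R²)` gives both cases. -/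

theorem ConvexOn.add_inner_gradient_le {G : Type*} [NormedAddCommGroup G]
    [InnerProductSpace ℝ G] [CompleteSpace G] {f : G → ℝ} (hf : ConvexOn ℝ Set.univ f)
    {x : G} (hfx : DifferentiableAt ℝ f x) (y : G) :
    f x + ⟪gradient f x, y - x⟫ ≤ f y := by
  have hφ : ConvexOn ℝ Set.univ (f ∘ AffineMap.lineMap (k := ℝ) x y) := by
    simpa using hf.comp_affineMap (AffineMap.lineMap x y)
  have hφ' : HasDerivAt (f ∘ AffineMap.lineMap (k := ℝ) x y) (fderiv ℝ f x (y - x)) 0 := by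
    refine HasFDerivAt.comp_hasDerivAt 0 ?_ AffineMap.hasDerivAt_lineMap
    simpa using hfx.hasFDerivAt
  have hslope := hφ.le_slope_of_hasDerivAt (Set.mem_univ 0) (Set.mem_univ 1) one_pos hφ'
  simp only [slope, Function.comp_apply, AffineMap.lineMap_apply_zero,
    AffineMap.lineMap_apply_one, sub_zero, inv_one, vsub_eq_sub, smul_eq_mul, one_mul] at hslope
  rw [gradient, InnerProductSpace.toDual_symm_apply]
  linarith

theorem ConvexOn.neg_mul_le_of_abs_le_on_closedBall {G : Type*} [NormedAddCommGroup G]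
    [NormedSpace ℝ G] {ψ : G → ℝ} (hψ : ConvexOn ℝ Set.univ ψ) {p : G} {M : ℝ}
    (hM : ∀ u ∈ Metric.closedBall p 1, |ψ u| ≤ M) (t : G) :
    -(M * (1 + 2 * ‖t‖)) ≤ ψ (p + t) := by
  have hMp := abs_le.1 (hM p (Metric.mem_closedBall_self zero_le_one))
  rcases eq_or_ne t 0 with rfl | ht
  · simpa using hMp.1
  set s := ‖t‖
  have hs : 0 < s := norm_pos_iff.2 ht
  set u := s⁻¹ • t
  have hu : p - u ∈ Metric.closedBall p 1 := by
    simp [u, norm_smul, s, hs.ne']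
  -- `p` splits the segment from `p - u` to `p + t` in the ratio `1 : s`
  have hp : (s / (s + 1)) • (p - u) + (1 / (s + 1)) • (p + t) = p := by
    simp only [u, smul_sub, smul_add, smul_smul]
    match_scalars <;> field_simp
    ring
  have hconv := hψ.2 (Set.mem_univ (p - u)) (Set.mem_univ (p + t))
    (by positivity : 0 ≤ s / (s + 1)) (by positivity : (0 : ℝ) ≤ 1 / (s + 1))
    (by field_simp)
  rw [hp, smul_eq_mul, smul_eq_mul] at hconv
  have hcleared : (s + 1) * ψ p ≤ s * ψ (p - u) + ψ (p + t) := by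
    have := mul_le_mul_of_nonneg_left hconv (by positivity : 0 ≤ s + 1)
    field_simp at this
    linarith
  have hMu := (abs_le.1 (hM _ hu)).2
  nlinarith [mul_le_mul_of_nonneg_left hMu hs.le]

theorem ConvexOn.bddBelow_range_inner_add_sq_add {G : Type*} [NormedAddCommGroup G]
    [InnerProductSpace ℝ G] [FiniteDimensional ℝ G] {ψ : G → ℝ} (hψ : ConvexOn ℝ Set.univ ψ)
    (hcont : Continuous ψ) (g p : G) {c : ℝ} (hc : 0 < c) :
    BddBelow (Set.range fun t => ⟪g, t⟫ + c / 2 * ‖t‖ ^ 2 + ψ (p + t)) := by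
  obtain ⟨M, hM⟩ := (isCompact_closedBall p 1).exists_bound_of_continuousOn hcont.continuousOn
  set b := ‖g‖ + 2 * M
  refine ⟨-(b ^ 2 / (2 * c)) - M, ?_⟩
  rintro _ ⟨t, rfl⟩
  have hψt := hψ.neg_mul_le_of_abs_le_on_closedBall (fun u hu => by simpa using hM u hu) t
  have hg := neg_le_of_abs_le (abs_real_inner_le_norm g t)
  have hquad : b * ‖t‖ - c / 2 * ‖t‖ ^ 2 ≤ b ^ 2 / (2 * c) := by
    rw [le_div_iff₀ (by positivity)]
    nlinarith [sq_nonneg (c * ‖t‖ - b)]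
  dsimp only
  linarith

section InexactUpdate

variable {f : PiLp 2 E → ℝ} {L : Fin n → ℝ} {Ψ : ∀ i, E i → ℝ}

theorem Hfun_eq_add_sum_Vi (x T : PiLp 2 E) :
    Hfun f L Ψ x T = f x + ∑ i, Vi f L Ψ x i (T i) := by
  simp only [Hfun, Vi, PiLp.inner_apply, Finset.sum_add_distrib, Finset.mul_sum]
  ring_nf

omit [∀ i, FiniteDimensional ℝ (E i)] in
theorem convexOn_Ffun (hf : ConvexOn ℝ Set.univ f) (hΨ : ∀ i, ConvexOn ℝ Set.univ (Ψ i)) :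
    ConvexOn ℝ Set.univ (Ffun f Ψ) := by
  refine ⟨convex_univ, fun x _ y _ a b ha hb hab => ?_⟩
  have hΨsum : ∑ i, Ψ i ((a • x + b • y) i) ≤ a * ∑ i, Ψ i (x i) + b * ∑ i, Ψ i (y i) := by
    rw [Finset.mul_sum, Finset.mul_sum, ← Finset.sum_add_distrib]
    exact Finset.sum_le_sum fun i _ => by
      simpa using (hΨ i).2 (Set.mem_univ _) (Set.mem_univ _) ha hb hab
  have hfxy := hf.2 (Set.mem_univ x) (Set.mem_univ y) ha hb hab
  simp only [Ffun, smul_eq_mul] at hfxy ⊢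
  linarith

theorem Hfun_sub_le (hfdiff : Differentiable ℝ f) (hfconv : ConvexOn ℝ Set.univ f)
    (x y : PiLp 2 E) :
    Hfun f L Ψ x (y - x) ≤ Ffun f Ψ y + 1 / 2 * ∑ i, L i * ‖y i - x i‖ ^ 2 := by
  have hgrad := hfconv.add_inner_gradient_le (hfdiff x) y
  simp only [Hfun, Ffun, PiLp.sub_apply, add_sub_cancel]
  linarith

theorem IsInexactUpdate.Hfun_le {δ : Fin n → ℝ} {x T : PiLp 2 E} (hL : ∀ i, 0 < L i)
    (hΨconv : ∀ i, ConvexOn ℝ Set.univ (Ψ i)) (hΨcont : ∀ i, Continuous (Ψ i))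
    (hT : IsInexactUpdate f L Ψ δ x T) (S : PiLp 2 E) :
    Hfun f L Ψ x T ≤ ∑ i, δ i + Hfun f L Ψ x S := by
  -- `ciInf_le` needs `BddBelow`: the infimum of an unbounded family is the junk value `0`
  have hblock : ∀ i, Vi f L Ψ x i (T i) ≤ δ i + Vi f L Ψ x i (S i) := fun i =>
    ((hT i).trans (min_le_right _ _)).trans <| add_le_add_right (ciInf_le
      ((hΨconv i).bddBelow_range_inner_add_sq_add (hΨcont i) _ (x i) (hL i)) (S i)) _
  have hsum := Finset.sum_le_sum fun i (_ : i ∈ Finset.univ) => hblock i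
  rw [Finset.sum_add_distrib] at hsum
  rw [Hfun_eq_add_sum_Vi, Hfun_eq_add_sum_Vi]
  linarith

theorem IsInexactUpdate.Hfun_le_convex_combination {δ : Fin n → ℝ} {x T : PiLp 2 E}
    (hL : ∀ i, 0 < L i) (hfdiff : Differentiable ℝ f) (hfconv : ConvexOn ℝ Set.univ f)
    (hΨconv : ∀ i, ConvexOn ℝ Set.univ (Ψ i)) (hΨcont : ∀ i, Continuous (Ψ i))
    (hT : IsInexactUpdate f L Ψ δ x T) {α : ℝ} (hα₀ : 0 ≤ α) (hα₁ : α ≤ 1) (z : PiLp 2 E) :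
    Hfun f L Ψ x T ≤ ∑ i, δ i +
      ((1 - α) * Ffun f Ψ x + α * Ffun f Ψ z + α ^ 2 / 2 * ∑ i, L i * ‖x i - z i‖ ^ 2) := by
  set y := (1 - α) • x + α • z
  have hstep : ∀ i, L i * ‖y i - x i‖ ^ 2 = α ^ 2 * (L i * ‖x i - z i‖ ^ 2) := fun i => by
    have : y i - x i = α • (z i - x i) := by simp only [y, PiLp.add_apply, PiLp.smul_apply]; module
    rw [this, norm_smul, norm_sub_rev, Real.norm_eq_abs, mul_pow, sq_abs]
    ring
  have hFy := (convexOn_Ffun hfconv hΨconv).2 (Set.mem_univ x) (Set.mem_univ z)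
    (sub_nonneg.2 hα₁) hα₀ (sub_add_cancel 1 α)
  calc Hfun f L Ψ x T ≤ ∑ i, δ i + Hfun f L Ψ x (y - x) := hT.Hfun_le hL hΨconv hΨcont _
    _ ≤ ∑ i, δ i + (Ffun f Ψ y + 1 / 2 * ∑ i, L i * ‖y i - x i‖ ^ 2) := by
      gcongr; exact Hfun_sub_le hfdiff hfconv x y
    _ ≤ _ := by
      simp only [hstep, ← Finset.mul_sum, smul_eq_mul] at hFy ⊢
      linarith

end InexactUpdate

theorem Hfun_residual_bound_general
    (L : Fin n → ℝ) (hL : ∀ i, 0 < L i)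
    (f : PiLp 2 E → ℝ) (hfdiff : Differentiable ℝ f) (hfconv : ConvexOn ℝ Set.univ f)
    (Ψ : ∀ i, E i → ℝ) (hΨconv : ∀ i, ConvexOn ℝ Set.univ (Ψ i))
    (hΨcont : ∀ i, Continuous (Ψ i))
    (Fstar : ℝ) (xstar : PiLp 2 E) (hstar : Ffun f Ψ xstar = Fstar)
    (hmin : ∀ y, Fstar ≤ Ffun f Ψ y)
    (x : PiLp 2 E) (R2 : ℝ) (hR2 : R2 = ∑ i, L i * ‖x i - xstar i‖ ^ 2) (hR2pos : 0 < R2)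
    (δ : Fin n → ℝ)
    (T : PiLp 2 E) (hT : IsInexactUpdate f L Ψ δ x T) :
    (Ffun f Ψ x - Fstar ≤ R2 →
      Hfun f L Ψ x T - Fstar ≤
        (∑ i, δ i) + (1 - (Ffun f Ψ x - Fstar) / (2 * R2)) * (Ffun f Ψ x - Fstar)) ∧
    (R2 < Ffun f Ψ x - Fstar →
      Hfun f L Ψ x T - Fstar ≤ (∑ i, δ i) + R2 / 2 ∧
        (∑ i, δ i) + R2 / 2 < (∑ i, δ i) + (Ffun f Ψ x - Fstar) / 2) := by
  have key : ∀ α : ℝ, 0 ≤ α → α ≤ 1 →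
      Hfun f L Ψ x T ≤ ∑ i, δ i + ((1 - α) * Ffun f Ψ x + α * Fstar + α ^ 2 / 2 * R2) := by
    intro α hα₀ hα₁
    simpa only [hstar, ← hR2] using
      hT.Hfun_le_convex_combination hL hfdiff hfconv hΨconv hΨcont hα₀ hα₁ xstar
  refine ⟨fun hle => ?_, fun hlt => ⟨by linarith [key 1 zero_le_one le_rfl], by linarith⟩⟩
  -- `α = (F(x) - F*) / R²` minimizes the right-hand side of `key`
  have h := key _ (div_nonneg (sub_nonneg.2 (hmin x)) hR2pos.le) ((div_le_one hR2pos).2 hle)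
  have hval : (1 - (Ffun f Ψ x - Fstar) / R2) * Ffun f Ψ x + (Ffun f Ψ x - Fstar) / R2 * Fstar
      + ((Ffun f Ψ x - Fstar) / R2) ^ 2 / 2 * R2
      = Fstar + (1 - (Ffun f Ψ x - Fstar) / (2 * R2)) * (Ffun f Ψ x - Fstar) := by
    field_simp
    ring
  linarith

/-- Lemma 4 of the paper: with `R² = ‖x − x*‖_L² > 0` and `Δ = Σ_i δ_i`,
if `F(x) − F* ≤ R²` then `H(x,T) − F* ≤ Δ + (1 − (F(x)−F*)/(2R²))(F(x)−F*)`, and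
if `F(x) − F* > R²` then `H(x,T) − F* ≤ Δ + R²/2 < Δ + (F(x)−F*)/2`. -/
theorem Hfun_residual_bound
    (hn : 0 < n)
    (L : Fin n → ℝ) (hL : ∀ i, 0 < L i)
    (f : PiLp 2 E → ℝ) (hfdiff : Differentiable ℝ f) (hfconv : ConvexOn ℝ Set.univ f)
    (hLip : ∀ (x : PiLp 2 E) (i : Fin n) (t : E i),
      ‖(gradient f (x + blockEmbed i t)) i - (gradient f x) i‖ ≤ L i * ‖t‖)
    (Ψ : ∀ i, E i → ℝ) (hΨconv : ∀ i, ConvexOn ℝ Set.univ (Ψ i))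
    (hΨcont : ∀ i, Continuous (Ψ i))
    (Fstar : ℝ) (xstar : PiLp 2 E) (hstar : Ffun f Ψ xstar = Fstar)
    (hmin : ∀ y, Fstar ≤ Ffun f Ψ y)
    (x : PiLp 2 E) (R2 : ℝ) (hR2 : R2 = ∑ i, L i * ‖x i - xstar i‖ ^ 2) (hR2pos : 0 < R2)
    (δ : Fin n → ℝ) (hδ : ∀ i, 0 ≤ δ i)
    (T : PiLp 2 E) (hT : IsInexactUpdate f L Ψ δ x T) :
    (Ffun f Ψ x - Fstar ≤ R2 →
      Hfun f L Ψ x T - Fstar ≤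
        (∑ i, δ i) + (1 - (Ffun f Ψ x - Fstar) / (2 * R2)) * (Ffun f Ψ x - Fstar)) ∧
    (R2 < Ffun f Ψ x - Fstar →
      Hfun f L Ψ x T - Fstar ≤ (∑ i, δ i) + R2 / 2 ∧
        (∑ i, δ i) + R2 / 2 < (∑ i, δ i) + (Ffun f Ψ x - Fstar) / 2) :=
  Hfun_residual_bound_general L hL f hfdiff hfconv Ψ hΨconv hΨcont Fstar xstar hstar hmin x R2 hR2
    hR2pos δ T hT
end
end

section
/- Suppose F = f + Ψ attains its minimum value F* at a point x*. Let x ∈ E with ‖x − x*‖_L > 0, let δ = (δ_1,…,δ_n) with δ_i ≥ 0, let T be a δ-inexact update at x, and set δ̄ = (1/n)·Σ_{i=1}^n δ_i. Then (1/n) Σ_{i=1}^n F(x + U_i T_i) − F* ≤ δ̄ + max{ 1 − (F(x) − F*)/(2n‖x − x*‖_L²), 1 − 1/(2n) } · (F(x) − F*). -/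
/-!
The block descent lemma gives `F(x + U_i t) ≤ F(x) - Ψ_i(x_i) + V_i(x, t)`, and the inexact
update gives `V_i(x, T_i) ≤ δ_i + V_i(x, t)` for every `t`. Taking `t = y_i - x_i`, summing over
`i` and using the gradient inequality for `f` yields, for every `y`,
`Σ_i F(x + U_i T_i) ≤ (n - 1) F(x) + Σ_i δ_i + F(y) + ½‖y - x‖_L²`.
For `y = (1 - θ) x + θ x*` convexity gives `F(y) ≤ F(x) - θ (F(x) - F*)`, and the choice
`θ = min 1 ((F(x) - F*) / ‖x - x*‖_L²)` produces the two branches of the maximum.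
-/

open scoped RealInnerProductSpace
open MeasureTheory

noncomputable section

variable {n : ℕ} {E : Fin n → Type*} [∀ i, NormedAddCommGroup (E i)]
  [∀ i, InnerProductSpace ℝ (E i)] [∀ i, FiniteDimensional ℝ (E i)]

open Set

theorem ConvexOn.mul_sub_le_sub {G : Type*} [AddCommGroup G] [Module ℝ G] {φ : G → ℝ}
    (hφ : ConvexOn ℝ univ φ) (z u : G) {s : ℝ} (hs : 0 ≤ s) :
    s * (φ z - φ (z - u)) ≤ φ (z + s • u) - φ z := by
  have hs1 : 0 < 1 + s := by linarith
  have hab : s / (1 + s) + 1 / (1 + s) = 1 := by field_simp; ring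
  have hbs : 1 / (1 + s) * s = s / (1 + s) := by field_simp
  have hz : (s / (1 + s)) • (z - u) + (1 / (1 + s)) • (z + s • u) = z := by
    linear_combination (norm := module) hab • z + hbs • u
  have h := hφ.2 (mem_univ (z - u)) (mem_univ (z + s • u)) (by positivity) (by positivity) hab
  rw [hz, smul_eq_mul, smul_eq_mul] at h
  have h' := mul_le_mul_of_nonneg_left h hs1.le
  field_simp at h'
  linarith

theorem ConvexOn.exists_sub_mul_norm_le {G : Type*} [NormedAddCommGroup G] [NormedSpace ℝ G]
    {φ : G → ℝ} (hφ : ConvexOn ℝ univ φ) {z : G} (hz : ContinuousAt φ z) :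
    ∃ M, ∀ t, φ z - M * ‖t‖ ≤ φ (z + t) := by
  obtain ⟨r, hr, hball⟩ := Metric.continuousAt_iff.mp hz 1 one_pos
  refine ⟨2 / r, fun t => ?_⟩
  rcases eq_or_ne t 0 with rfl | ht
  · simp
  set u : G := (r / 2 / ‖t‖) • t
  have hsu : (2 / r * ‖t‖) • u = t := by
    rw [smul_smul]
    field_simp
    simp
  have hu : φ z - φ (z - u) > -1 := by
    have : dist (z - u) z < r := by
      rw [dist_eq_norm, sub_sub_cancel_left, norm_neg, norm_smul,
        Real.norm_of_nonneg (by positivity)]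
      field_simp
      linarith
    linarith [(abs_lt.mp (Real.dist_eq _ _ ▸ hball this)).2]
  have h := hφ.mul_sub_le_sub z u (s := 2 / r * ‖t‖) (by positivity)
  rw [hsu] at h
  nlinarith [mul_le_mul_of_nonneg_left hu.le (by positivity : 0 ≤ 2 / r * ‖t‖)]

theorem PiLp.single_smul {ι : Type*} [DecidableEq ι] {β : ι → Type*} [∀ i, AddCommGroup (β i)]
    [∀ i, Module ℝ (β i)] (p : ENNReal) (i : ι) (c : ℝ) (a : β i) :
    PiLp.single p i (c • a) = c • PiLp.single p i a := by
  rw [← PiLp.toLp_single, ← PiLp.toLp_single, Pi.single_smul, WithLp.toLp_smul]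

theorem PiLp.inner_single_right {ι : Type*} [Fintype ι] [DecidableEq ι] {β : ι → Type*}
    [∀ i, NormedAddCommGroup (β i)] [∀ i, InnerProductSpace ℝ (β i)]
    (x : PiLp 2 β) (i : ι) (a : β i) : ⟪x, PiLp.single 2 i a⟫ = ⟪x i, a⟫ := by
  rw [PiLp.inner_apply, Fintype.sum_eq_single i fun j hj => by
    rw [PiLp.single_eq_of_ne 2 hj, inner_zero_right], PiLp.single_eq_same]

theorem PiLp.sum_apply_add_single {ι : Type*} [Fintype ι] [DecidableEq ι] {β : ι → Type*}
    [∀ i, AddCommGroup (β i)] (p : ENNReal) (Ψ : ∀ i, β i → ℝ) (x : PiLp p β) (i : ι) (a : β i) :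
    ∑ j, Ψ j ((x + PiLp.single p i a) j) = ∑ j, Ψ j (x j) - Ψ i (x i) + Ψ i (x i + a) := by
  have h : ∑ j, (Ψ j ((x + PiLp.single p i a) j) - Ψ j (x j)) = Ψ i (x i + a) - Ψ i (x i) := by
    rw [Fintype.sum_eq_single i fun j hj => by
      rw [WithLp.ofLp_add, Pi.add_apply, PiLp.single_eq_of_ne p hj, add_zero, sub_self]]
    rw [WithLp.ofLp_add, Pi.add_apply, PiLp.single_eq_same]
  rw [Finset.sum_sub_distrib] at h
  linarith

theorem PiLp.convexOn_sum_apply {ι : Type*} [Fintype ι] {β : ι → Type*}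
    [∀ i, AddCommGroup (β i)] [∀ i, Module ℝ (β i)] (p : ENNReal) {Ψ : ∀ i, β i → ℝ}
    (hΨ : ∀ i, ConvexOn ℝ univ (Ψ i)) : ConvexOn ℝ univ fun x : PiLp p β => ∑ i, Ψ i (x i) := by
  have := Finset.sum_induction (s := Finset.univ) (fun i (x : PiLp p β) => Ψ i (x i))
    (ConvexOn ℝ univ) (fun _ _ => ConvexOn.add) (convexOn_const 0 convex_univ)
    fun i _ => (hΨ i).comp_linearMap
      ((LinearMap.proj i).comp (WithLp.linearEquiv p ℝ (∀ i, β i)).toLinearMap)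
  simpa [Finset.sum_fn] using this

section Gradient

variable {F : Type*} [NormedAddCommGroup F] [InnerProductSpace ℝ F] [CompleteSpace F]

theorem HasGradientAt.hasDerivAt_comp_add_smul {f : F → ℝ} {g x v : F} {s : ℝ}
    (hf : HasGradientAt f g (x + s • v)) :
    HasDerivAt (fun s : ℝ => f (x + s • v)) ⟪g, v⟫ s := by
  have hline : HasDerivAt (fun s : ℝ => x + s • v) v s := by
    simpa using ((hasDerivAt_id s).smul_const v).const_add x
  simpa [Function.comp_def] using hf.hasFDerivAt.comp_hasDerivAt s hline

theorem ConvexOn.add_inner_gradient_le_s10 {f : F → ℝ} (hconv : ConvexOn ℝ univ f) {x : F}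
    (hf : DifferentiableAt ℝ f x) (v : F) : f x + ⟪gradient f x, v⟫ ≤ f (x + v) := by
  have hline : ConvexOn ℝ univ fun s : ℝ => f (x + s • v) := by
    have h : (fun s : ℝ => f (x + s • v)) = f ∘ AffineMap.lineMap x (x + v) := by
      ext s
      simp [AffineMap.lineMap_apply, add_comm]
    rw [h]
    exact hconv.comp_affineMap _
  have hd : HasDerivAt (fun s : ℝ => f (x + s • v)) ⟪gradient f x, v⟫ 0 :=
    HasGradientAt.hasDerivAt_comp_add_smul (by simpa using hf.hasGradientAt)
  have := hline.le_slope_of_hasDerivAt (mem_univ 0) (mem_univ 1) one_pos hd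
  simp only [slope_def_field, one_smul, zero_smul, add_zero, sub_zero, div_one] at this
  linarith

end Gradient

theorem image_one_le_of_hasDerivAt_le {φ φ' : ℝ → ℝ} {K : ℝ} (hφ : ∀ s, HasDerivAt φ (φ' s) s)
    (hφ' : ∀ s ∈ Ico (0 : ℝ) 1, φ' s ≤ φ' 0 + K * s) : φ 1 ≤ φ 0 + φ' 0 + K / 2 := by
  have hB : ∀ s, HasDerivAt (fun s => φ 0 + s * φ' 0 + K / 2 * s ^ 2) (φ' 0 + K * s) s := by
    intro s
    have h := (((hasDerivAt_id s).mul_const (φ' 0)).const_add (φ 0)).add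
      ((hasDerivAt_pow 2 s).const_mul (K / 2))
    exact h.congr_deriv (by norm_num; ring)
  have := image_le_of_deriv_right_le_deriv_boundary (a := 0) (b := 1)
    (fun s _ => (hφ s).continuousAt.continuousWithinAt) (fun s _ => (hφ s).hasDerivWithinAt)
    (by simp) (fun s _ => (hB s).continuousAt.continuousWithinAt)
    (fun s _ => (hB s).hasDerivWithinAt) hφ' (right_mem_Icc.mpr zero_le_one)
  simpa using this

section BlockCoordinateDescent

variable {f : PiLp 2 E → ℝ} {L : Fin n → ℝ} {Ψ : ∀ i, E i → ℝ}

theorem apply_add_blockEmbed_le (hf : Differentiable ℝ f) {x : PiLp 2 E} {i : Fin n} {K : ℝ}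
    (hLip : ∀ t, ‖gradient f (x + blockEmbed i t) i - gradient f x i‖ ≤ K * ‖t‖) (t : E i) :
    f (x + blockEmbed i t) ≤ f x + ⟪gradient f x i, t⟫ + K / 2 * ‖t‖ ^ 2 := by
  set v := blockEmbed i t
  have hinner : ∀ y, ⟪y, v⟫ = ⟪y i, t⟫ := fun y => PiLp.inner_single_right y i t
  have hline : ∀ s : ℝ, x + s • v = x + blockEmbed i (s • t) := fun s =>
    congrArg (x + ·) (PiLp.single_smul 2 i s t).symm
  have hφ' : ∀ s ∈ Ico (0 : ℝ) 1, ⟪gradient f (x + s • v), v⟫ ≤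
      ⟪gradient f (x + (0 : ℝ) • v), v⟫ + K * ‖t‖ ^ 2 * s := by
    intro s hs
    rw [zero_smul, add_zero, hinner, hinner, ← sub_le_iff_le_add', ← inner_sub_left]
    calc ⟪gradient f (x + s • v) i - gradient f x i, t⟫
        ≤ ‖gradient f (x + s • v) i - gradient f x i‖ * ‖t‖ := real_inner_le_norm _ _
      _ ≤ K * ‖s • t‖ * ‖t‖ := by
          rw [hline]; exact mul_le_mul_of_nonneg_right (hLip _) (norm_nonneg t)
      _ = K * ‖t‖ ^ 2 * s := by rw [norm_smul, Real.norm_of_nonneg hs.1]; ring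
  have h := image_one_le_of_hasDerivAt_le
    (fun s => (hf _).hasGradientAt.hasDerivAt_comp_add_smul) hφ'
  simp only [one_smul, zero_smul, add_zero, hinner] at h
  linarith

theorem ffun_add_blockEmbed_le (hf : Differentiable ℝ f) {x : PiLp 2 E} {i : Fin n}
    (hLip : ∀ t, ‖gradient f (x + blockEmbed i t) i - gradient f x i‖ ≤ L i * ‖t‖) (t : E i) :
    Ffun f Ψ (x + blockEmbed i t) ≤ Ffun f Ψ x - Ψ i (x i) + Vi f L Ψ x i t := by
  have hf := apply_add_blockEmbed_le hf hLip t
  have hΨ : ∑ j, Ψ j ((x + blockEmbed i t) j) = ∑ j, Ψ j (x j) - Ψ i (x i) + Ψ i (x i + t) :=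
    PiLp.sum_apply_add_single 2 Ψ x i t
  unfold Ffun Vi
  linarith

theorem bddBelow_range_vi {i : Fin n} (hL : 0 < L i) (hΨ : ConvexOn ℝ univ (Ψ i))
    (x : PiLp 2 E) : BddBelow (range (Vi f L Ψ x i)) := by
  obtain ⟨M, hM⟩ := hΨ.exists_sub_mul_norm_le ((hΨ.continuousOn isOpen_univ).continuousAt
    Filter.univ_mem)
  set g := gradient f x i
  refine ⟨Ψ i (x i) - (‖g‖ + M) ^ 2 / (2 * L i), ?_⟩
  rintro _ ⟨t, rfl⟩
  have hg : -(‖g‖ * ‖t‖) ≤ ⟪g, t⟫ := neg_le_of_abs_le (abs_real_inner_le_norm g t)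
  have hsq : 0 ≤ (L i * ‖t‖ - (‖g‖ + M)) ^ 2 / (2 * L i) := by positivity
  have hexp : (L i * ‖t‖ - (‖g‖ + M)) ^ 2 / (2 * L i) =
      L i / 2 * ‖t‖ ^ 2 - (‖g‖ + M) * ‖t‖ + (‖g‖ + M) ^ 2 / (2 * L i) := by
    field_simp; ring
  simp only [Vi]
  linarith [hM t]

/-- A range that is not bounded below has `⨅` equal to the junk value `0`, so the inexact-update
condition constrains `V_i(x, T_i)` only once `V_i(x, ·)` is known to be bounded below. -/
theorem IsInexactUpdate.vi_le {δ : Fin n → ℝ} {x T : PiLp 2 E}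
    (hT : IsInexactUpdate f L Ψ δ x T) {i : Fin n} (hbdd : BddBelow (range (Vi f L Ψ x i)))
    (t : E i) : Vi f L Ψ x i (T i) ≤ δ i + Vi f L Ψ x i t :=
  (le_min_iff.mp (hT i)).2.trans (by gcongr; exact ciInf_le hbdd t)

theorem sum_vi_eq_hfun (x T : PiLp 2 E) :
    ∑ i, Vi f L Ψ x i (T i) = Hfun f L Ψ x T - f x := by
  simp only [Vi, Hfun, PiLp.inner_apply, Finset.sum_add_distrib, Finset.mul_sum]
  ring_nf

theorem hfun_sub_le (hf : Differentiable ℝ f) (hconv : ConvexOn ℝ univ f) (x y : PiLp 2 E) :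
    Hfun f L Ψ x (y - x) ≤ Ffun f Ψ y + 1 / 2 * ∑ i, L i * ‖y i - x i‖ ^ 2 := by
  have h := hconv.add_inner_gradient_le_s10 (hf x) (y - x)
  simp only [Hfun, Ffun, PiLp.sub_apply, add_sub_cancel] at *
  linarith

theorem sum_ffun_add_blockEmbed_le (hf : Differentiable ℝ f) (hconv : ConvexOn ℝ univ f)
    {x : PiLp 2 E}
    (hLip : ∀ i t, ‖gradient f (x + blockEmbed i t) i - gradient f x i‖ ≤ L i * ‖t‖)
    (hbdd : ∀ i, BddBelow (range (Vi f L Ψ x i))) {δ : Fin n → ℝ} {T : PiLp 2 E}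
    (hT : IsInexactUpdate f L Ψ δ x T) (y : PiLp 2 E) :
    ∑ i, Ffun f Ψ (x + blockEmbed i (T i)) ≤
      (n - 1) * Ffun f Ψ x + ∑ i, δ i + Ffun f Ψ y + 1 / 2 * ∑ i, L i * ‖y i - x i‖ ^ 2 := by
  have hH := hfun_sub_le (L := L) (Ψ := Ψ) hf hconv x y
  calc ∑ i, Ffun f Ψ (x + blockEmbed i (T i))
      ≤ ∑ i, (Ffun f Ψ x - Ψ i (x i) + (δ i + Vi f L Ψ x i ((y - x) i))) :=
        Finset.sum_le_sum fun i _ => (ffun_add_blockEmbed_le hf (hLip i) (T i)).trans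
          (by gcongr; exact hT.vi_le (hbdd i) _)
    _ = n * Ffun f Ψ x - ∑ i, Ψ i (x i) + ∑ i, δ i + (Hfun f L Ψ x (y - x) - f x) := by
        rw [← sum_vi_eq_hfun]
        simp only [Finset.sum_add_distrib, Finset.sum_sub_distrib, Finset.sum_const,
          Finset.card_univ, Fintype.card_fin, nsmul_eq_mul]
        ring
    _ ≤ _ := by
        unfold Ffun at *
        linarith

end BlockCoordinateDescent

theorem exists_mem_Icc_add_div_le_max_mul {Δ R N : ℝ} (hΔ : 0 ≤ Δ) (hR : 0 < R) (hN : 0 ≤ N) :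
    ∃ θ ∈ Icc (0 : ℝ) 1,
      Δ + (θ ^ 2 / 2 * R - θ * Δ) / N ≤ max (1 - Δ / (2 * N * R)) (1 - 1 / (2 * N)) * Δ := by
  rcases le_or_gt Δ R with hle | hlt
  · refine ⟨Δ / R, ⟨by positivity, (div_le_one hR).mpr hle⟩, ?_⟩
    calc Δ + ((Δ / R) ^ 2 / 2 * R - Δ / R * Δ) / N = (1 - Δ / (2 * N * R)) * Δ := by
          field_simp; ring
      _ ≤ _ := by gcongr; exact le_max_left _ _
  · refine ⟨1, ⟨zero_le_one, le_rfl⟩, ?_⟩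
    calc Δ + (1 ^ 2 / 2 * R - 1 * Δ) / N ≤ Δ + (Δ / 2 - Δ) / N := by
          rw [one_pow, one_mul]; gcongr; linarith
      _ = (1 - 1 / (2 * N)) * Δ := by ring
      _ ≤ _ := by gcongr; exact le_max_right _ _

theorem expected_residual_decrease_general
    (hn : 0 < n)
    (L : Fin n → ℝ) (hL : ∀ i, 0 < L i)
    (f : PiLp 2 E → ℝ) (hfdiff : Differentiable ℝ f) (hfconv : ConvexOn ℝ Set.univ f)
    (hLip : ∀ (x : PiLp 2 E) (i : Fin n) (t : E i),
      ‖(gradient f (x + blockEmbed i t)) i - (gradient f x) i‖ ≤ L i * ‖t‖)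
    (Ψ : ∀ i, E i → ℝ) (hΨconv : ∀ i, ConvexOn ℝ Set.univ (Ψ i))
    (Fstar : ℝ) (xstar : PiLp 2 E) (hstar : Ffun f Ψ xstar = Fstar)
    (hmin : ∀ y, Fstar ≤ Ffun f Ψ y)
    (x : PiLp 2 E) (hx : 0 < ∑ i, L i * ‖x i - xstar i‖ ^ 2)
    (δ : Fin n → ℝ)
    (T : PiLp 2 E) (hT : IsInexactUpdate f L Ψ δ x T) :
    (1 / (n : ℝ)) * ∑ i, Ffun f Ψ (x + blockEmbed i (T i)) - Fstar ≤
      (1 / (n : ℝ)) * ∑ i, δ i +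
        max (1 - (Ffun f Ψ x - Fstar) / (2 * n * ∑ i, L i * ‖x i - xstar i‖ ^ 2))
            (1 - 1 / (2 * (n : ℝ))) * (Ffun f Ψ x - Fstar) := by
  have hn' : (0 : ℝ) < n := Nat.cast_pos.mpr hn
  set R := ∑ i, L i * ‖x i - xstar i‖ ^ 2
  set Δ := Ffun f Ψ x - Fstar
  obtain ⟨θ, ⟨hθ0, hθ1⟩, hθ⟩ :=
    exists_mem_Icc_add_div_le_max_mul (sub_nonneg.mpr (hmin x)) hx hn'.le
  set y := (1 - θ) • x + θ • xstar
  have hFconv : ConvexOn ℝ univ (Ffun f Ψ) := hfconv.add (PiLp.convexOn_sum_apply 2 hΨconv)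
  have hFy : Ffun f Ψ y ≤ (1 - θ) * Ffun f Ψ x + θ * Fstar :=
    hstar ▸ hFconv.2 trivial trivial (by linarith) hθ0 (by ring)
  have hdist : ∑ i, L i * ‖y i - x i‖ ^ 2 = θ ^ 2 * R := by
    rw [Finset.mul_sum]
    refine Finset.sum_congr rfl fun i _ => ?_
    have : y i - x i = θ • (xstar i - x i) := by
      simp only [y, WithLp.ofLp_add, WithLp.ofLp_smul, Pi.add_apply, Pi.smul_apply]
      module
    rw [this, norm_smul, Real.norm_of_nonneg hθ0, norm_sub_rev]
    ring
  have hsum := sum_ffun_add_blockEmbed_le hfdiff hfconv (hLip x)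
    (fun i => bddBelow_range_vi (hL i) (hΨconv i) x) hT y
  calc (1 / (n : ℝ)) * ∑ i, Ffun f Ψ (x + blockEmbed i (T i)) - Fstar
      ≤ 1 / n * (n * Ffun f Ψ x + ∑ i, δ i + (θ ^ 2 / 2 * R - θ * Δ)) - Fstar := by
        gcongr
        linarith
    _ = 1 / n * ∑ i, δ i + (Δ + (θ ^ 2 / 2 * R - θ * Δ) / n) := by
        field_simp
        ring
    _ ≤ _ := by linarith

/-- One-step expected residual bound for inexact coordinate descent with uniform probabilities:
`(1/n) Σ_i F(x + U_i T_i) − F* ≤ δ̄ + max{1 − (F(x)−F*)/(2n‖x−x*‖_L²), 1 − 1/(2n)}·(F(x)−F*)`. -/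
theorem expected_residual_decrease
    (hn : 0 < n)
    (L : Fin n → ℝ) (hL : ∀ i, 0 < L i)
    (f : PiLp 2 E → ℝ) (hfdiff : Differentiable ℝ f) (hfconv : ConvexOn ℝ Set.univ f)
    (hLip : ∀ (x : PiLp 2 E) (i : Fin n) (t : E i),
      ‖(gradient f (x + blockEmbed i t)) i - (gradient f x) i‖ ≤ L i * ‖t‖)
    (Ψ : ∀ i, E i → ℝ) (hΨconv : ∀ i, ConvexOn ℝ Set.univ (Ψ i))
    (hΨcont : ∀ i, Continuous (Ψ i))
    (Fstar : ℝ) (xstar : PiLp 2 E) (hstar : Ffun f Ψ xstar = Fstar)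
    (hmin : ∀ y, Fstar ≤ Ffun f Ψ y)
    (x : PiLp 2 E) (hx : 0 < ∑ i, L i * ‖x i - xstar i‖ ^ 2)
    (δ : Fin n → ℝ) (hδ : ∀ i, 0 ≤ δ i)
    (T : PiLp 2 E) (hT : IsInexactUpdate f L Ψ δ x T) :
    (1 / (n : ℝ)) * ∑ i, Ffun f Ψ (x + blockEmbed i (T i)) - Fstar ≤
      (1 / (n : ℝ)) * ∑ i, δ i +
        max (1 - (Ffun f Ψ x - Fstar) / (2 * n * ∑ i, L i * ‖x i - xstar i‖ ^ 2))
            (1 - 1 / (2 * (n : ℝ))) * (Ffun f Ψ x - Fstar) :=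
  expected_residual_decrease_general hn L hL f hfdiff hfconv hLip Ψ hΨconv Fstar xstar hstar hmin x
    hx δ T hT
end
end
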